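/- arXiv:1601.02601 — 2 statements merged into one kernel-verified Lean document; each statement's English description precedes it below -/
import Mathlib

section
/- Let Q = Q(r,m,0) with m ≥ 3 and r ≥ 0. Then χ'_s(Q) = n_1(Q) = r + m. -/
open SimpleGraph

variable {V : Type*}

/-- A vertex distinguishing proper edge `k`-coloring (vdec): a proper edge coloring
(edges sharing an endpoint get different colors) such that distinct vertices have
distinct sets of colors on their incident edges. -/
def IsVDEC (G : SimpleGraph V) (k : ℕ) (c : Sym2 V → Fin k) : Prop :=
  (∀ ⦃u v w : V⦄, G.Adj u v → G.Adj u w → v ≠ w → c s(u, v) ≠ c s(u, w)) ∧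
  (∀ u v : V, u ≠ v →
    {i : Fin k | ∃ w, G.Adj u w ∧ c s(u, w) = i} ≠
    {i : Fin k | ∃ w, G.Adj v w ∧ c s(v, w) = i})

/-- `χ'ₛ(G)`: the minimum number of colors in a vdec of `G`. -/
noncomputable def vdecNum (G : SimpleGraph V) : ℕ :=
  sInf {k : ℕ | ∃ c : Sym2 V → Fin k, IsVDEC G k c}

/-- `n_d(G)`: the number of vertices of degree `d` in `G`. -/
noncomputable def numDeg (G : SimpleGraph V) (d : ℕ) : ℕ :=
  Nat.card {v : V // Nat.card (G.neighborSet v) = d}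

/-- Vertex type of the tree `Q(r,m,n)`: the center `w₀`, the leaves `w₁,…,w_r`,
the pairs `sᵢ, s'ᵢ` (encoded as `(i,0)` and `(i,1)`), the vertices `t₁,…,tₙ`,
and the leaves `t'_{i,j}` for `j < rv i`. -/
abbrev QVert (r m n : ℕ) (rv : Fin n → ℕ) : Type :=
  Unit ⊕ Fin r ⊕ (Fin m × Fin 2) ⊕ (Fin n ⊕ Σ i : Fin n, Fin (rv i))

/-- The tree `Q(r,m,n)` of diameter four: the center `w₀` is adjacent to the `r` leaves
`wᵢ`, to the `m` vertices `sᵢ` (each `sᵢ` having one further leaf neighbor `s'ᵢ`),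
and to the `n` vertices `tᵢ`, where `tᵢ` has `rv i` further neighbors, all leaves. -/
def QGraph (r m n : ℕ) (rv : Fin n → ℕ) : SimpleGraph (QVert r m n rv) :=
  SimpleGraph.fromRel (fun a b =>
    (a = Sum.inl () ∧
      ((∃ i, b = Sum.inr (Sum.inl i)) ∨
       (∃ i, b = Sum.inr (Sum.inr (Sum.inl (i, (0 : Fin 2))))) ∨
       (∃ i, b = Sum.inr (Sum.inr (Sum.inr (Sum.inl i)))))) ∨
    (∃ i : Fin m, a = Sum.inr (Sum.inr (Sum.inl (i, (0 : Fin 2)))) ∧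
       b = Sum.inr (Sum.inr (Sum.inl (i, (1 : Fin 2))))) ∨
    (∃ (i : Fin n) (j : Fin (rv i)), a = Sum.inr (Sum.inr (Sum.inr (Sum.inl i))) ∧
       b = Sum.inr (Sum.inr (Sum.inr (Sum.inr ⟨i, j⟩)))))

/-!
A pendant vertex sees a single colour, and distinct pendant vertices must see distinct
colours, so every vdec uses at least `n₁` colours. The tree `Q(r,m,0)` has the `r + m`
pendant vertices `wᵢ` and `s'ᵢ`, and `r + m` colours suffice: colour `w₀wᵢ` with `i`, `w₀sᵢ`
with `r + i` and `sᵢs'ᵢ` with `r + (i + 1 mod m)`. The colour sets are then all colours at `w₀`,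
`{r + i, r + (i + 1 mod m)}` at `sᵢ` and distinct singletons at the leaves; for `m ≥ 3` the
pairs `{i, i + 1}` in `ℤ/m` are pairwise distinct.
-/

section VertexDistinguishing

variable {α : Type*} (G : SimpleGraph V)

namespace SimpleGraph

def colorSet (c : Sym2 V → α) (v : V) : Set α := (fun w => c s(v, w)) '' G.neighborSet v

variable {G}

lemma colorSet_eq_singleton {c : Sym2 V → α} {v w : V} (h : G.neighborSet v = {w}) :
    G.colorSet c v = {c s(v, w)} := by
  rw [colorSet, h, Set.image_singleton]

lemma card_colorSet {c : Sym2 V → α} {v : V}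
    (hc : (G.neighborSet v).InjOn fun w => c s(v, w)) :
    Nat.card (G.colorSet c v) = Nat.card (G.neighborSet v) :=
  Nat.card_image_of_injOn hc

end SimpleGraph

variable {G}

lemma isVDEC_iff {k : ℕ} {c : Sym2 V → Fin k} :
    IsVDEC G k c ↔
      (∀ v, (G.neighborSet v).InjOn fun w => c s(v, w)) ∧
        Function.Injective (G.colorSet c) := by
  refine and_congr ⟨fun h v _ hu _ hw huw => ?_, fun h u _ _ hv hw hvw => ?_⟩
    Function.injective_iff_pairwise_ne.symm
  · by_contra hne; exact h hu hw hne huw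
  · exact mt (h u hv hw) hvw

lemma IsVDEC.numDeg_one_le {k : ℕ} {c : Sym2 V → Fin k} (hc : IsVDEC G k c) :
    numDeg G 1 ≤ k := by
  have hpendant (v : {v // Nat.card (G.neighborSet v) = 1}) : ∃ w, G.neighborSet v = {w} :=
    Set.ncard_eq_one.1 v.2
  choose nbr hnbr using hpendant
  have hinj : Function.Injective fun v => c s(v.1, nbr v) := fun u v huv =>
    Subtype.ext <| (isVDEC_iff.1 hc).2 <| by
      rw [G.colorSet_eq_singleton (hnbr u), G.colorSet_eq_singleton (hnbr v)]
      exact congrArg _ huv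
  exact (Nat.card_le_card_of_injective _ hinj).trans_eq (Nat.card_fin k)

lemma vdecNum_eq_of_isVDEC {k : ℕ} {c : Sym2 V → Fin k} (hc : IsVDEC G k c)
    (hk : k ≤ numDeg G 1) : vdecNum G = k :=
  le_antisymm (Nat.sInf_le ⟨c, hc⟩)
    (hk.trans (le_csInf ⟨k, c, hc⟩ fun _ ⟨_, hc'⟩ => hc'.numDeg_one_le))

end VertexDistinguishing

section DeeperLabel

variable {α : Type*} [LinearOrder α] (depth : V → ℕ) (label : V → α)

def deeperLabel : Sym2 V → α :=
  Sym2.lift ⟨fun a b => if depth a < depth b then label b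
      else if depth b < depth a then label a else max (label a) (label b),
    fun a b => by dsimp only; split_ifs <;> first | rfl | omega | exact max_comm _ _⟩

variable {depth label}

lemma deeperLabel_mk_of_lt {a b : V} (h : depth a < depth b) :
    deeperLabel depth label s(a, b) = label b :=
  if_pos h

end DeeperLabel

namespace Fin

variable {m : ℕ}

lemma add_one_ne_self (hm : 2 ≤ m) [NeZero m] (i : Fin m) : i + 1 ≠ i := by
  rw [Ne, add_eq_left, Fin.ext_iff, Fin.val_one', Fin.val_zero, Nat.mod_eq_of_lt hm]
  omega

lemma add_one_add_one_ne_self (hm : 3 ≤ m) [NeZero m] (i : Fin m) : i + 1 + 1 ≠ i := by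
  rw [Ne, add_assoc, add_eq_left, Fin.ext_iff, Fin.val_add, Fin.val_one', Fin.val_zero,
    Nat.mod_eq_of_lt (by omega : 1 < m), Nat.mod_eq_of_lt hm]
  omega

end Fin

namespace QTree

abbrev Vertex (r m : ℕ) : Type := QVert r m 0 Fin.elim0

abbrev graph (r m : ℕ) : SimpleGraph (Vertex r m) := QGraph r m 0 Fin.elim0

variable {r m : ℕ}

def center : Vertex r m := Sum.inl ()
def w (i : Fin r) : Vertex r m := Sum.inr (Sum.inl i)
def s (i : Fin m) : Vertex r m := Sum.inr (Sum.inr (Sum.inl (i, 0)))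
def s' (i : Fin m) : Vertex r m := Sum.inr (Sum.inr (Sum.inl (i, 1)))

def leaf : Fin r ⊕ Fin m → Vertex r m := Sum.elim w s'

lemma leaf_injective : Function.Injective (leaf : Fin r ⊕ Fin m → Vertex r m) := by
  rintro (i | i) (j | j) h <;> simp_all [leaf, w, s']

lemma eq_center_or_w_or_s_or_s' (v : Vertex r m) :
    v = center ∨ (∃ i, v = w i) ∨ (∃ i, v = s i) ∨ ∃ i, v = s' i := by
  rcases v with _ | i | ⟨i, j⟩ | x | ⟨x, _⟩
  · exact .inl rfl
  · exact .inr (.inl ⟨i, rfl⟩)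
  · fin_cases j
    exacts [.inr (.inr (.inl ⟨i, rfl⟩)), .inr (.inr (.inr ⟨i, rfl⟩))]
  all_goals exact x.elim0

lemma eq_center_or_leaf_or_s (v : Vertex r m) :
    v = center ∨ (∃ x, v = leaf x) ∨ ∃ i, v = s i := by
  rcases eq_center_or_w_or_s_or_s' v with h | ⟨i, h⟩ | h | ⟨i, h⟩
  exacts [.inl h, .inr (.inl ⟨.inl i, h⟩), .inr (.inr h), .inr (.inl ⟨.inr i, h⟩)]

lemma neighborSet_center :
    (graph r m).neighborSet center = Set.range (Sum.elim w s) := by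
  ext v
  rcases eq_center_or_w_or_s_or_s' v with rfl | ⟨i, rfl⟩ | ⟨i, rfl⟩ | ⟨i, rfl⟩ <;>
    simp [QGraph, center, w, s, s']

lemma neighborSet_w (i : Fin r) : (graph r m).neighborSet (w i) = {center} := by
  ext v
  rcases eq_center_or_w_or_s_or_s' v with rfl | ⟨j, rfl⟩ | ⟨j, rfl⟩ | ⟨j, rfl⟩ <;>
    simp [QGraph, center, w, s, s']

lemma neighborSet_s (i : Fin m) : (graph r m).neighborSet (s i) = {center, s' i} := by
  ext v
  rcases eq_center_or_w_or_s_or_s' v with rfl | ⟨j, rfl⟩ | ⟨j, rfl⟩ | ⟨j, rfl⟩ <;>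
    simp [QGraph, center, w, s, s']

lemma neighborSet_s' (i : Fin m) : (graph r m).neighborSet (s' i) = {s i} := by
  ext v
  rcases eq_center_or_w_or_s_or_s' v with rfl | ⟨j, rfl⟩ | ⟨j, rfl⟩ | ⟨j, rfl⟩ <;>
    simp [QGraph, center, w, s, s', eq_comm (a := i)]

lemma neighborSet_leaf (x : Fin r ⊕ Fin m) :
    (graph r m).neighborSet (leaf x) = {Sum.elim (fun _ => center) s x} := by
  rcases x with i | i
  exacts [neighborSet_w i, neighborSet_s' i]

lemma card_neighborSet_center : Nat.card ((graph r m).neighborSet center) = r + m := by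
  have hinj : Function.Injective (Sum.elim w s : Fin r ⊕ Fin m → Vertex r m) := by
    rintro (i | i) (j | j) h <;> simp_all [w, s]
  rw [neighborSet_center, Nat.card_range_of_injective hinj, Nat.card_sum, Nat.card_fin,
    Nat.card_fin]

lemma card_neighborSet_s (i : Fin m) : Nat.card ((graph r m).neighborSet (s i)) = 2 := by
  rw [neighborSet_s, Nat.card_coe_set_eq, Set.ncard_pair (by simp [center, s'])]

lemma card_neighborSet_leaf (x : Fin r ⊕ Fin m) :
    Nat.card ((graph r m).neighborSet (leaf x)) = 1 := by
  rw [neighborSet_leaf, Nat.card_coe_set_eq, Set.ncard_singleton]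

lemma numDeg_one (hm : 3 ≤ m) : numDeg (graph r m) 1 = r + m := by
  have hpendant : {v | Nat.card ((graph r m).neighborSet v) = 1} = Set.range leaf := by
    refine Set.Subset.antisymm (fun v hv => ?_) (Set.range_subset_iff.2 card_neighborSet_leaf)
    rcases eq_center_or_leaf_or_s v with rfl | ⟨x, rfl⟩ | ⟨i, rfl⟩
    · have : r + m = 1 := card_neighborSet_center.symm.trans hv
      omega
    · exact Set.mem_range_self x
    · exact absurd ((card_neighborSet_s i).symm.trans hv) (by decide)
  change Nat.card {v | Nat.card ((graph r m).neighborSet v) = 1} = r + m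
  rw [hpendant, Nat.card_range_of_injective leaf_injective, Nat.card_sum, Nat.card_fin,
    Nat.card_fin]

section Coloring

variable [NeZero m]

def depth : Vertex r m → ℕ
  | Sum.inl _ => 0
  | Sum.inr (Sum.inl _) => 1
  | Sum.inr (Sum.inr (Sum.inl (_, j))) => 1 + j
  | Sum.inr (Sum.inr (Sum.inr (Sum.inl i))) => i.elim0
  | Sum.inr (Sum.inr (Sum.inr (Sum.inr ⟨i, _⟩))) => i.elim0

/-- The center's label is never read: it is the shallower endpoint of each of its edges. -/
def label : Vertex r m → Fin (r + m)
  | Sum.inl _ => finSumFinEquiv (.inr 0)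
  | Sum.inr (Sum.inl i) => finSumFinEquiv (.inl i)
  | Sum.inr (Sum.inr (Sum.inl (i, j))) => finSumFinEquiv (.inr (if j = 0 then i else i + 1))
  | Sum.inr (Sum.inr (Sum.inr (Sum.inl i))) => i.elim0
  | Sum.inr (Sum.inr (Sum.inr (Sum.inr ⟨i, _⟩))) => i.elim0

def color : Sym2 (Vertex r m) → Fin (r + m) := deeperLabel depth label

lemma color_center_w (i : Fin r) : color (m := m) s(center, w i) = finSumFinEquiv (.inl i) :=
  deeperLabel_mk_of_lt (by simp [depth, center, w])

lemma color_center_s (i : Fin m) : color (r := r) s(center, s i) = finSumFinEquiv (.inr i) := by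
  rw [color, deeperLabel_mk_of_lt (by simp [depth, center, s])]
  simp [label, s]

lemma color_s_s' (i : Fin m) : color (r := r) s(s i, s' i) = finSumFinEquiv (.inr (i + 1)) := by
  rw [color, deeperLabel_mk_of_lt (by simp [depth, s, s'])]
  simp [label, s']

def leafColor (x : Fin r ⊕ Fin m) : Fin (r + m) := finSumFinEquiv (Sum.map id (· + 1) x)

lemma leafColor_injective : Function.Injective (leafColor : Fin r ⊕ Fin m → Fin (r + m)) :=
  finSumFinEquiv.injective.comp <|
    Sum.map_injective.2 ⟨Function.injective_id, add_left_injective 1⟩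

lemma colorSet_leaf (x : Fin r ⊕ Fin m) :
    (graph r m).colorSet color (leaf x) = {leafColor x} := by
  rw [colorSet_eq_singleton (neighborSet_leaf x), Sym2.eq_swap]
  rcases x with i | i
  exacts [congrArg _ (color_center_w i), congrArg _ (color_s_s' i)]

lemma colorSet_s (i : Fin m) :
    (graph r m).colorSet color (s i) =
      {finSumFinEquiv (.inr i), finSumFinEquiv (.inr (i + 1))} := by
  rw [colorSet, neighborSet_s, Set.image_pair, Sym2.eq_swap, color_center_s, color_s_s']

lemma injOn_color (hm : 2 ≤ m) (v : Vertex r m) :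
    ((graph r m).neighborSet v).InjOn fun x => color s(v, x) := by
  rcases eq_center_or_leaf_or_s v with rfl | ⟨y, rfl⟩ | ⟨i, rfl⟩
  · rw [neighborSet_center]
    refine Function.Injective.injOn_range ?_
    convert finSumFinEquiv.injective using 1
    ext (i | i) <;> simp [color_center_w, color_center_s]
  · rw [neighborSet_leaf]
    exact Set.injOn_singleton _ _
  · rw [neighborSet_s, Set.injOn_pair, Sym2.eq_swap, color_center_s, color_s_s',
      EmbeddingLike.apply_eq_iff_eq, Sum.inr.injEq]
    exact fun h => (Fin.add_one_ne_self hm i h.symm).elim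

lemma colorSet_injective (hm : 3 ≤ m) :
    Function.Injective ((graph r m).colorSet color) := by
  intro u v h
  -- In a proper colouring a vertex sees as many colours as it has neighbours, so only vertices
  -- of equal degree (two leaves, or two `sᵢ`) remain to be compared.
  have hdeg : Nat.card ((graph r m).neighborSet u) = Nat.card ((graph r m).neighborSet v) := by
    rw [← card_colorSet (injOn_color (by omega) u), ← card_colorSet (injOn_color (by omega) v),
      h]
  rcases eq_center_or_leaf_or_s u with rfl | ⟨x, rfl⟩ | ⟨i, rfl⟩ <;>
    rcases eq_center_or_leaf_or_s v with rfl | ⟨y, rfl⟩ | ⟨j, rfl⟩ <;>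
    simp only [card_neighborSet_center, card_neighborSet_leaf, card_neighborSet_s] at hdeg <;>
    first | rfl | omega | skip
  · rw [colorSet_leaf, colorSet_leaf, Set.singleton_eq_singleton_iff] at h
    rw [leafColor_injective h]
  · rw [colorSet_s, colorSet_s, Set.pair_eq_pair_iff] at h
    simp only [EmbeddingLike.apply_eq_iff_eq, Sum.inr.injEq] at h
    rcases h with ⟨rfl, -⟩ | ⟨rfl, hji⟩
    · rfl
    · exact (Fin.add_one_add_one_ne_self hm j hji).elim

lemma isVDEC_color (hm : 3 ≤ m) : IsVDEC (graph r m) (r + m) color :=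
  isVDEC_iff.2 ⟨injOn_color (by omega), colorSet_injective hm⟩

end Coloring

end QTree

/-- For `Q = Q(r,m,0)` with `m ≥ 3` and `r ≥ 0`,
`χ'ₛ(Q) = n₁(Q) = r + m`. -/
theorem vdecNum_QGraph_rm0 (r m : ℕ) (hm : 3 ≤ m) :
    vdecNum (QGraph r m 0 Fin.elim0) = numDeg (QGraph r m 0 Fin.elim0) 1 ∧
    numDeg (QGraph r m 0 Fin.elim0) 1 = r + m := by
  have : NeZero m := ⟨by omega⟩
  have hpendant : numDeg (QGraph r m 0 Fin.elim0) 1 = r + m := QTree.numDeg_one hm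
  rw [hpendant]
  exact ⟨vdecNum_eq_of_isVDEC (QTree.isVDEC_color hm) hpendant.ge, rfl⟩
end

section
/- Let T be a spanning tree of a connected graph G, let E' = E(G) \ E(T), and let G[E'] be the subgraph of G induced by the edge set E'. Then χ'_s(G) ≤ χ'_s(T) + χ'(G[E']), where χ' denotes the chromatic index (minimum number of colors in a proper edge coloring). -/
open SimpleGraph

variable {V : Type*}

/-- A proper edge `k`-coloring: edges sharing an endpoint receive different colors. -/
def IsProperEdgeColoring (G : SimpleGraph V) (k : ℕ) (c : Sym2 V → Fin k) : Prop :=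
  ∀ ⦃u v w : V⦄, G.Adj u v → G.Adj u w → v ≠ w → c s(u, v) ≠ c s(u, w)

/-- The chromatic index `χ'(G)`: the minimum number of colors in a proper edge
coloring of `G`. -/
noncomputable def chromIndex (G : SimpleGraph V) : ℕ :=
  sInf {k : ℕ | ∃ c : Sym2 V → Fin k, IsProperEdgeColoring G k c}

/-!
Colour the edges of `T` by an optimal vdec with colours `0, …, k₁ - 1` and the other edges of
`G` by an optimal proper colouring with colours `k₁, …, k₁ + k₂ - 1`. The result is proper, and
the colours below `k₁` at a vertex are exactly its colours in `T`, so it is a vdec of `G`.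

An optimal vdec of `T` exists because an injective edge colouring of a connected graph is a vdec
unless the graph is a single edge, and in that case `G = T`.
-/

lemma Fin.castAdd_ne_natAdd {m n : ℕ} (i : Fin m) (j : Fin n) :
    Fin.castAdd n i ≠ Fin.natAdd m j := by
  simp only [ne_eq, Fin.ext_iff, Fin.val_castAdd, Fin.val_natAdd]
  omega

theorem IsProperEdgeColoring.of_injective {G : SimpleGraph V} {k : ℕ} {c : Sym2 V → Fin k}
    (hc : Function.Injective c) : IsProperEdgeColoring G k c :=
  fun _ _ _ _ _ hvw h => hvw (Sym2.congr_right.mp (hc h))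

theorem exists_isProperEdgeColoring (G : SimpleGraph V) [Finite V] :
    ∃ k, ∃ c : Sym2 V → Fin k, IsProperEdgeColoring G k c :=
  ⟨_, _, .of_injective (Finite.equivFin (Sym2 V)).injective⟩

namespace SimpleGraph

variable {G : SimpleGraph V}

theorem Preconnected.mem_of_adj_closed (hG : G.Preconnected) {S : Set V} {u : V} (hu : u ∈ S)
    (hS : ∀ x ∈ S, ∀ y, G.Adj x y → y ∈ S) (x : V) : x ∈ S := by
  by_contra hx
  obtain ⟨d, -, hd, hd'⟩ := (hG u x).some.exists_boundary_dart S hu hx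
  exact hd' (hS _ hd _ d.adj)

theorem Preconnected.adj_of_card_eq_two (hG : G.Preconnected) (hV : Nat.card V = 2) {a b : V}
    (hab : a ≠ b) : G.Adj a b := by
  obtain ⟨b', -, hb'⟩ := (Nat.card_eq_two_iff' a).mp hV
  by_contra hnadj
  have hclosed : ∀ x ∈ ({a} : Set V), ∀ y, G.Adj x y → y ∈ ({a} : Set V) := by
    rintro x rfl y hy
    obtain rfl : y = b := (hb' y hy.ne').trans (hb' b hab.symm).symm
    exact absurd hy hnadj
  exact hab (hG.mem_of_adj_closed (Set.mem_singleton a) hclosed b).symm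

variable {k : ℕ} {c : Sym2 V → Fin k}

def incidentColors (G : SimpleGraph V) (c : Sym2 V → Fin k) (u : V) : Set (Fin k) :=
  {i | ∃ w, G.Adj u w ∧ c s(u, w) = i}

theorem eq_of_incidentColors_eq (hc : Function.Injective c) {u v w : V} (huv : u ≠ v)
    (h : G.incidentColors c u = G.incidentColors c v) (huw : G.Adj u w) : w = v := by
  obtain ⟨w', -, hw'⟩ : c s(u, w) ∈ G.incidentColors c v := h ▸ ⟨w, huw, rfl⟩
  rcases Sym2.eq_iff.mp (hc hw') with ⟨hvu, -⟩ | ⟨hvw, -⟩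
  · exact absurd hvu.symm huv
  · exact hvw.symm

theorem Preconnected.isVDEC_of_injective (hG : G.Preconnected) (hV : Nat.card V ≠ 2)
    (hc : Function.Injective c) : IsVDEC G k c := by
  refine ⟨IsProperEdgeColoring.of_injective hc, fun u v huv h => hV ?_⟩
  have hclosed : ∀ x ∈ ({u, v} : Set V), ∀ y, G.Adj x y → y ∈ ({u, v} : Set V) := by
    rintro x (rfl | rfl) y hy
    · exact Or.inr (eq_of_incidentColors_eq hc huv h hy)
    · exact Or.inl (eq_of_incidentColors_eq hc huv.symm h.symm hy)
  refine (Nat.card_eq_two_iff' u).mpr ⟨v, huv.symm, fun y hy => ?_⟩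
  exact (hG.mem_of_adj_closed (Set.mem_insert u {v}) hclosed y).resolve_left hy

theorem Preconnected.exists_isVDEC [Finite V] (hG : G.Preconnected) (hV : Nat.card V ≠ 2) :
    ∃ k, ∃ c : Sym2 V → Fin k, IsVDEC G k c :=
  ⟨_, _, hG.isVDEC_of_injective hV (Finite.equivFin (Sym2 V)).injective⟩

end SimpleGraph

section sumColoring

variable {G T : SimpleGraph V} {k₁ k₂ : ℕ} {c₁ : Sym2 V → Fin k₁} {c₂ : Sym2 V → Fin k₂}

open Classical in
noncomputable def sumColoring (T : SimpleGraph V) (c₁ : Sym2 V → Fin k₁) (c₂ : Sym2 V → Fin k₂) :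
    Sym2 V → Fin (k₁ + k₂) :=
  fun e => if e ∈ T.edgeSet then Fin.castAdd k₂ (c₁ e) else Fin.natAdd k₁ (c₂ e)

theorem sumColoring_of_adj {u v : V} (h : T.Adj u v) :
    sumColoring T c₁ c₂ s(u, v) = Fin.castAdd k₂ (c₁ s(u, v)) :=
  if_pos h

theorem sumColoring_of_not_adj {u v : V} (h : ¬T.Adj u v) :
    sumColoring T c₁ c₂ s(u, v) = Fin.natAdd k₁ (c₂ s(u, v)) :=
  if_neg h

theorem IsProperEdgeColoring.sumColoring (h₁ : IsProperEdgeColoring T k₁ c₁)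
    (h₂ : IsProperEdgeColoring (fromEdgeSet (G.edgeSet \ T.edgeSet)) k₂ c₂) :
    IsProperEdgeColoring G (k₁ + k₂) (sumColoring T c₁ c₂) := by
  intro u v w huv huw hvw
  have hrest : ∀ {x}, G.Adj u x → ¬T.Adj u x → (fromEdgeSet (G.edgeSet \ T.edgeSet)).Adj u x :=
    fun hx hTx => ⟨⟨hx, hTx⟩, hx.ne⟩
  by_cases hv : T.Adj u v <;> by_cases hw : T.Adj u w
  · simpa [sumColoring_of_adj hv, sumColoring_of_adj hw] using h₁ hv hw hvw
  · simpa [sumColoring_of_adj hv, sumColoring_of_not_adj hw] using Fin.castAdd_ne_natAdd _ _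
  · simpa [sumColoring_of_not_adj hv, sumColoring_of_adj hw] using (Fin.castAdd_ne_natAdd _ _).symm
  · simpa [sumColoring_of_not_adj hv, sumColoring_of_not_adj hw]
      using h₂ (hrest huv hv) (hrest huw hw) hvw

theorem incidentColors_sumColoring (hle : T ≤ G) (u : V) :
    T.incidentColors c₁ u = Fin.castAdd k₂ ⁻¹' G.incidentColors (sumColoring T c₁ c₂) u := by
  ext i
  constructor
  · rintro ⟨w, hw, rfl⟩
    exact ⟨w, hle hw, sumColoring_of_adj hw⟩
  · rintro ⟨w, hw, hcw⟩
    by_cases hTw : T.Adj u w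
    · rw [sumColoring_of_adj hTw, Fin.castAdd_inj] at hcw
      exact ⟨w, hTw, hcw⟩
    · rw [sumColoring_of_not_adj hTw] at hcw
      exact absurd hcw.symm (Fin.castAdd_ne_natAdd _ _)

theorem IsVDEC.sumColoring (hle : T ≤ G) (h₁ : IsVDEC T k₁ c₁)
    (h₂ : IsProperEdgeColoring (fromEdgeSet (G.edgeSet \ T.edgeSet)) k₂ c₂) :
    IsVDEC G (k₁ + k₂) (sumColoring T c₁ c₂) :=
  ⟨IsProperEdgeColoring.sumColoring h₁.1 h₂, fun u v huv h => h₁.2 u v huv <| by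
    change T.incidentColors c₁ u = T.incidentColors c₁ v
    rw [incidentColors_sumColoring hle u, incidentColors_sumColoring hle v]
    exact congrArg _ h⟩

end sumColoring

theorem vdecNum_le_spanningTree_add_chromIndex_general {V : Type*} [Fintype V]
    (G T : SimpleGraph V) (hle : T ≤ G) (hT : T.IsTree) :
    vdecNum G ≤ vdecNum T + chromIndex (SimpleGraph.fromEdgeSet (G.edgeSet \ T.edgeSet)) := by
  have hTconn := hT.connected.preconnected
  by_cases hV : Nat.card V = 2
  · obtain rfl : G = T := le_antisymm (fun a b hab => hTconn.adj_of_card_eq_two hV hab.ne) hle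
    exact Nat.le_add_right _ _
  · obtain ⟨c₁, hc₁⟩ := Nat.sInf_mem (hTconn.exists_isVDEC hV)
    obtain ⟨c₂, hc₂⟩ := Nat.sInf_mem <|
      exists_isProperEdgeColoring (fromEdgeSet (G.edgeSet \ T.edgeSet))
    exact Nat.sInf_le ⟨_, hc₁.sumColoring hle hc₂⟩

/-- If `T` is a spanning tree of a connected graph `G` and
`E' = E(G) \ E(T)`, then `χ'ₛ(G) ≤ χ'ₛ(T) + χ'(G[E'])`. -/
theorem vdecNum_le_spanningTree_add_chromIndex {V : Type*} [Fintype V]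
    (G T : SimpleGraph V) (hconn : G.Connected) (hle : T ≤ G) (hT : T.IsTree) :
    vdecNum G ≤ vdecNum T + chromIndex (SimpleGraph.fromEdgeSet (G.edgeSet \ T.edgeSet)) :=
  vdecNum_le_spanningTree_add_chromIndex_general G T hle hT
end
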